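/- arXiv:2106.14288 — 4 statements merged into one kernel-verified Lean document; each statement's English description precedes it below -/
import Mathlib

section
/- Let d > 0. For every ε₀ > 0 there exists N₀ such that for all N ≥ N₀: if α_1, …, α_N are independent standard Gaussian random variables, ζ_i = α_i² for 1 ≤ i ≤ N, and ζ_min = min_{1 ≤ i ≤ N} ζ_i, then E[ζ_1^d] / E[(N ζ_min)^d] ≥ 1/(1 + ε₀). -/
open MeasureTheory ProbabilityTheory Filter Real Set Topology
open scoped NNReal ENNReal

/-!
The denominator tends to `0`, so the ratio even tends to `∞`. Split `ζ_min` at the threshold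
`η / N`. Below it, `(N ζ_min)^d ≤ η^d`. Above it, `(N ζ_min)^d ≤ N^d ζ_1^d` on the event that all
`ζ_i` exceed `η / N`; since `ζ_1` is independent of the other coordinates, this contributes at most
`N^d E[ζ^d] q^(N-1)` with `q = P(ζ > η / N)`. The Gaussian density is bounded below near `0`, so
`q ≤ 1 - C √(η / N) ≤ exp (-C √(η / N))`, and `N^d q^(N-1)` decays like `N^d exp (-C' √N)`.
-/

lemma mul_prod_succ_eq_prod_cons {α 𝕜 : Type*} [CommMonoid 𝕜] {n : ℕ} (f g : α → 𝕜)
    (x : Fin (n + 1) → α) :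
    f (x 0) * ∏ i : Fin n, g (x i.succ) =
      ∏ i, (Fin.cons f fun _ => g : Fin (n + 1) → α → 𝕜) i (x i) := by
  simp [Fin.prod_univ_succ]

lemma integral_mul_prod_succ {α 𝕜 : Type*} [RCLike 𝕜] [MeasurableSpace α] (μ : Measure α)
    [SigmaFinite μ] (f g : α → 𝕜) (n : ℕ) :
    ∫ x, f (x 0) * ∏ i : Fin n, g (x i.succ) ∂Measure.pi (fun _ : Fin (n + 1) => μ) =
      (∫ y, f y ∂μ) * (∫ y, g y ∂μ) ^ n := by
  simp_rw [mul_prod_succ_eq_prod_cons, integral_fintype_prod_eq_prod, Fin.prod_univ_succ]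
  simp

lemma integrable_mul_prod_succ {α 𝕜 : Type*} [NormedCommRing 𝕜] [MeasurableSpace α]
    {μ : Measure α} [SigmaFinite μ] {f g : α → 𝕜} (hf : Integrable f μ) (hg : Integrable g μ)
    (n : ℕ) :
    Integrable (fun x => f (x 0) * ∏ i : Fin n, g (x i.succ))
      (Measure.pi fun _ : Fin (n + 1) => μ) := by
  simp_rw [mul_prod_succ_eq_prod_cons]
  exact Integrable.fintype_prod fun i => Fin.cases hf (fun _ => hg) i

theorem ProbabilityTheory.iIndepFun.integral_comp_eq_integral_pi {Ω ι β : Type*} [Fintype ι]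
    [MeasurableSpace Ω] [MeasurableSpace β] {P : Measure Ω} [IsProbabilityMeasure P]
    {μ : Measure β} [IsProbabilityMeasure μ] {X : ι → Ω → β} (hX : iIndepFun X P)
    (hlaw : ∀ i, P.map (X i) = μ) {F : (ι → β) → ℝ}
    (hF : AEStronglyMeasurable F (Measure.pi fun _ => μ)) :
    ∫ ω, F (fun i => X i ω) ∂P = ∫ x, F x ∂Measure.pi fun _ => μ := by
  have hXm : ∀ i, AEMeasurable (X i) P := fun i =>
    aemeasurable_of_map_neZero (by rw [hlaw i]; infer_instance)
  have hjoint : P.map (fun ω i => X i ω) = Measure.pi fun _ => μ := by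
    simp_rw [hX.map_fun_eq_pi_map hXm, hlaw]
  rw [← hjoint] at hF ⊢
  exact (integral_map (aemeasurable_pi_lambda _ hXm) hF).symm

lemma rpow_mul_iInf_sq_le {n : ℕ} (x : Fin (n + 1) → ℝ) {s a d : ℝ} (hs : 0 ≤ s) (ha : 0 ≤ a)
    (hd : 0 ≤ d) :
    (s * ⨅ i, x i ^ 2) ^ d ≤ (s * a) ^ d +
      s ^ d * ((x 0 ^ 2) ^ d * ∏ i : Fin n, {y : ℝ | a < y ^ 2}.indicator 1 (x i.succ)) := by
  have hinf : 0 ≤ ⨅ i, x i ^ 2 := le_ciInf fun i => sq_nonneg _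
  have hind : ∀ y, 0 ≤ {y : ℝ | a < y ^ 2}.indicator (1 : ℝ → ℝ) y :=
    Set.indicator_nonneg fun _ _ => zero_le_one
  rcases le_or_gt (⨅ i, x i ^ 2) a with hle | hlt
  · have : 0 ≤ s ^ d *
        ((x 0 ^ 2) ^ d * ∏ i : Fin n, {y : ℝ | a < y ^ 2}.indicator 1 (x i.succ)) :=
      mul_nonneg (by positivity)
        (mul_nonneg (by positivity) (Finset.prod_nonneg fun i _ => hind _))
    have := rpow_le_rpow (mul_nonneg hs hinf) (mul_le_mul_of_nonneg_left hle hs) hd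
    linarith
  · have hall : ∀ i, a < x i ^ 2 := fun i => hlt.trans_le (ciInf_le (Finite.bddBelow_range _) i)
    have hprod : ∏ i : Fin n, {y : ℝ | a < y ^ 2}.indicator (1 : ℝ → ℝ) (x i.succ) = 1 :=
      Finset.prod_eq_one fun i _ =>
        Set.indicator_of_mem (show x i.succ ∈ {y : ℝ | a < y ^ 2} from hall i.succ) 1
    have := rpow_le_rpow (mul_nonneg hs hinf)
      (mul_le_mul_of_nonneg_left (ciInf_le (Finite.bddBelow_range _) 0) hs) hd
    rw [hprod, mul_one, ← mul_rpow hs (sq_nonneg _)]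
    linarith [rpow_nonneg (mul_nonneg hs ha) d]

lemma measurable_rpow_mul_iInf_sq (N : ℕ) (s d : ℝ) :
    Measurable fun x : Fin N → ℝ => (s * ⨅ i, x i ^ 2) ^ d := by
  fun_prop

lemma tendsto_rpow_mul_exp_neg_mul_div_sqrt (p : ℝ) {b : ℝ} (hb : 0 < b) :
    Tendsto (fun n : ℕ => ((n : ℝ) + 1) ^ p * exp (n * -(b / √((n : ℝ) + 1)))) atTop (𝓝 0) := by
  have hsqrt : Tendsto (fun n : ℕ => √((n : ℝ) + 1)) atTop atTop :=
    tendsto_sqrt_atTop.comp (tendsto_atTop_add_const_right _ 1 tendsto_natCast_atTop_atTop)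
  have hlim := ((tendsto_rpow_mul_exp_neg_mul_atTop_nhds_zero (2 * p) b hb).comp hsqrt).const_mul
    (exp b)
  rw [mul_zero] at hlim
  refine tendsto_of_tendsto_of_tendsto_of_le_of_le tendsto_const_nhds hlim (fun n => by positivity)
    fun n => ?_
  set x := √((n : ℝ) + 1) with hx
  have hx1 : 1 ≤ x := one_le_sqrt.2 (by simp)
  have hxsq : x ^ 2 = (n : ℝ) + 1 := sq_sqrt (by positivity)
  have hpow : ((n : ℝ) + 1) ^ p = x ^ (2 * p) := by
    rw [rpow_mul (sqrt_nonneg _), rpow_two, hxsq]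
  have hexp : n * -(b / x) ≤ b + -b * x := by
    rw [show (n : ℝ) = x ^ 2 - 1 by linarith]
    field_simp
    nlinarith
  calc ((n : ℝ) + 1) ^ p * exp (n * -(b / x)) ≤ x ^ (2 * p) * exp (b + -b * x) := by
        rw [hpow]
        gcongr
    _ = _ := by
        rw [exp_add]
        simp only [Function.comp_apply, ← hx]
        ring

lemma integrable_sq_rpow_gaussianReal (μ : ℝ) (v : ℝ≥0) {p : ℝ} (hp : 0 ≤ p) :
    Integrable (fun x : ℝ => (x ^ 2) ^ p) (gaussianReal μ v) := by
  refine (memLp_id_gaussianReal (2 * p).toNNReal).integrable_norm_rpow'.congr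
    (ae_of_all _ fun x => ?_)
  simp only [id, norm_eq_abs, ENNReal.coe_toReal, Real.coe_toNNReal _ (by positivity : 0 ≤ 2 * p)]
  rw [← sq_abs, ← rpow_natCast, ← rpow_mul (abs_nonneg x), Nat.cast_ofNat]

lemma integral_sq_rpow_gaussianReal_pos (μ : ℝ) {v : ℝ≥0} (hv : v ≠ 0) {p : ℝ} (hp : 0 ≤ p) :
    0 < ∫ x, (x ^ 2) ^ p ∂gaussianReal μ v := by
  have := nullSingletonClass_gaussianReal (μ := μ) hv
  refine (integral_pos_iff_support_of_nonneg (fun x => by positivity)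
    (integrable_sq_rpow_gaussianReal μ v hp)).2 ?_
  have hsupp : {(0 : ℝ)}ᶜ ⊆ Function.support fun x : ℝ => (x ^ 2) ^ p :=
    fun x hx => (rpow_pos_of_pos (pow_pos (abs_pos.2 hx) 2 |>.trans_eq (sq_abs x)) p).ne'
  calc (0 : ℝ≥0∞) < gaussianReal μ v {0}ᶜ := by simp [measure_compl]
    _ ≤ _ := measure_mono hsupp

lemma gaussianPDFReal_one_le_of_sq_le_one {x : ℝ} (hx : x ^ 2 ≤ 1) :
    gaussianPDFReal 0 1 1 ≤ gaussianPDFReal 0 1 x := by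
  unfold gaussianPDFReal
  gcongr _ * rexp (-?_ / _)
  simpa using hx

lemma mul_le_gaussianReal_real_Icc {r : ℝ} (hr0 : 0 ≤ r) (hr1 : r ≤ 1) :
    gaussianPDFReal 0 1 1 * r ≤ (gaussianReal 0 1).real (Icc 0 r) := by
  rw [measureReal_def, gaussianReal_apply_eq_integral 0 one_ne_zero, ENNReal.toReal_ofReal
    (setIntegral_nonneg measurableSet_Icc fun x _ => gaussianPDFReal_nonneg _ _ _)]
  have := setIntegral_ge_of_const_le_real (s := Icc 0 r) (μ := volume) measurableSet_Icc (by simp)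
    (fun x hx => gaussianPDFReal_one_le_of_sq_le_one (x := x) (by nlinarith [hx.1, hx.2]))
    (integrable_gaussianPDFReal 0 1).integrableOn
  simpa [hr0] using this

lemma gaussianReal_real_lt_sq_le_exp {a : ℝ} (ha0 : 0 ≤ a) (ha1 : a ≤ 1) :
    (gaussianReal 0 1).real {x | a < x ^ 2} ≤ exp (-(gaussianPDFReal 0 1 1 * √a)) := by
  have hsub : {x : ℝ | a < x ^ 2} ⊆ (Icc 0 √a)ᶜ := fun x hx hx' =>
    (not_le.2 hx) ((pow_le_pow_left₀ hx'.1 hx'.2 2).trans_eq (sq_sqrt ha0))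
  have hball := mul_le_gaussianReal_real_Icc (sqrt_nonneg a) (sqrt_le_one.2 ha1)
  calc (gaussianReal 0 1).real {x | a < x ^ 2} ≤ (gaussianReal 0 1).real (Icc 0 √a)ᶜ :=
        measureReal_mono hsub
    _ = 1 - (gaussianReal 0 1).real (Icc 0 √a) := probReal_compl_eq_one_sub measurableSet_Icc
    _ ≤ 1 - gaussianPDFReal 0 1 1 * √a := by linarith
    _ ≤ exp (-(gaussianPDFReal 0 1 1 * √a)) := by
        linarith [add_one_le_exp (-(gaussianPDFReal 0 1 1 * √a))]

noncomputable def scaledMinChiSqMoment (d : ℝ) (N : ℕ) : ℝ :=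
  ∫ x, ((N : ℝ) * ⨅ i : Fin N, x i ^ 2) ^ d ∂Measure.pi fun _ : Fin N => gaussianReal 0 1

lemma scaledMinChiSqMoment_succ_le {d a : ℝ} (hd : 0 ≤ d) (ha : 0 ≤ a) (n : ℕ) :
    scaledMinChiSqMoment d (n + 1) ≤ (((n : ℝ) + 1) * a) ^ d +
      ((n : ℝ) + 1) ^ d * ((∫ y, (y ^ 2) ^ d ∂gaussianReal 0 1) *
        (gaussianReal 0 1).real {y | a < y ^ 2} ^ n) := by
  have ht : MeasurableSet {y : ℝ | a < y ^ 2} := measurableSet_lt measurable_const (by fun_prop)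
  have hint : Integrable
      (fun x => (x 0 ^ 2) ^ d * ∏ i : Fin n, {y : ℝ | a < y ^ 2}.indicator 1 (x i.succ))
      (Measure.pi fun _ => gaussianReal 0 1) :=
    integrable_mul_prod_succ (integrable_sq_rpow_gaussianReal 0 1 hd)
      ((integrable_const (1 : ℝ)).indicator ht) n
  rw [scaledMinChiSqMoment, Nat.cast_add_one, ← integral_indicator_one ht,
    ← integral_mul_prod_succ, ← integral_const_mul]
  refine (integral_mono_of_nonneg (ae_of_all _ fun x => ?_)
    ((integrable_const _).add (hint.const_mul _))
    (ae_of_all _ fun x => rpow_mul_iInf_sq_le x (by positivity) ha hd)).trans_eq ?_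
  · exact rpow_nonneg (mul_nonneg (by positivity) (le_ciInf fun i => sq_nonneg _)) d
  · simp only [Pi.add_apply]
    rw [integral_add (integrable_const _) (hint.const_mul _), integral_const]
    simp

lemma scaledMinChiSqMoment_pos {d : ℝ} (hd : 0 ≤ d) {N : ℕ} (hN : 0 < N) :
    0 < scaledMinChiSqMoment d N := by
  have : Nonempty (Fin N) := ⟨⟨0, hN⟩⟩
  have hinf : ∀ x : Fin N → ℝ, 0 ≤ ⨅ i, x i ^ 2 := fun x => le_ciInf fun i => sq_nonneg _
  have hint : Integrable (fun x : Fin N → ℝ => ((N : ℝ) * ⨅ i, x i ^ 2) ^ d)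
      (Measure.pi fun _ => gaussianReal 0 1) := by
    refine ((integrable_comp_eval (i := ⟨0, hN⟩) (integrable_sq_rpow_gaussianReal 0 1 hd)).const_mul
      ((N : ℝ) ^ d)).mono' (measurable_rpow_mul_iInf_sq N _ d).aestronglyMeasurable
      (ae_of_all _ fun x => ?_)
    have hx := mul_nonneg (Nat.cast_nonneg N) (hinf x)
    rw [norm_of_nonneg (rpow_nonneg hx d), ← mul_rpow (Nat.cast_nonneg N) (sq_nonneg _)]
    exact rpow_le_rpow hx
      (mul_le_mul_of_nonneg_left (ciInf_le (Finite.bddBelow_range _) _) (Nat.cast_nonneg N)) hd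
  refine (integral_pos_iff_support_of_nonneg
    (fun x => rpow_nonneg (mul_nonneg (Nat.cast_nonneg N) (hinf x)) d) hint).2 ?_
  have hsupp : univ.pi (fun _ => {(0 : ℝ)}ᶜ) ⊆
      Function.support fun x : Fin N → ℝ => ((N : ℝ) * ⨅ i, x i ^ 2) ^ d := by
    intro x hx
    obtain ⟨j, hj⟩ := exists_eq_ciInf_of_finite (f := fun i => x i ^ 2)
    rw [Function.mem_support, ← hj]
    exact (rpow_pos_of_pos
      (mul_pos (by exact_mod_cast hN) (pow_two_pos_of_ne_zero (hx j trivial))) d).ne'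
  refine lt_of_lt_of_le ?_ (measure_mono hsupp)
  have := nullSingletonClass_gaussianReal (μ := 0) one_ne_zero
  simp [Measure.pi_pi, measure_compl]

theorem tendsto_scaledMinChiSqMoment {d : ℝ} (hd : 0 < d) :
    Tendsto (scaledMinChiSqMoment d) atTop (𝓝 0) := by
  rw [← tendsto_add_atTop_iff_nat 1]
  refine tendsto_order.2 ⟨fun b hb => Eventually.of_forall fun n =>
    hb.trans (scaledMinChiSqMoment_pos hd.le n.succ_pos), fun ε hε => ?_⟩
  set η := (ε / 2) ^ d⁻¹
  have hη : 0 < η := rpow_pos_of_pos (half_pos hε) _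
  have hηd : η ^ d = ε / 2 := rpow_inv_rpow (half_pos hε).le hd.ne'
  set C := gaussianPDFReal 0 1 1
  have hC : 0 < C := gaussianPDFReal_pos 0 1 1 one_ne_zero
  set c := ∫ y, (y ^ 2) ^ d ∂gaussianReal 0 1
  have herr := (tendsto_rpow_mul_exp_neg_mul_div_sqrt d (mul_pos hC (sqrt_pos.2 hη))).const_mul c
  rw [mul_zero] at herr
  filter_upwards [herr.eventually (gt_mem_nhds (half_pos hε)), eventually_ge_atTop ⌈η⌉₊]
    with n hn hnη
  have hN : (0 : ℝ) < n + 1 := by positivity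
  have ha1 : η / (n + 1) ≤ 1 := by
    rw [div_le_one hN]
    linarith [Nat.le_ceil η, (Nat.cast_le (α := ℝ)).2 hnη]
  have htail : (gaussianReal 0 1).real {y | η / (n + 1) < y ^ 2} ^ n ≤
      exp (n * -(C * √η / √((n : ℝ) + 1))) := by
    rw [exp_nat_mul, mul_div_assoc, ← sqrt_div hη.le]
    exact pow_le_pow_left₀ measureReal_nonneg
      (gaussianReal_real_lt_sq_le_exp (by positivity) ha1) n
  calc scaledMinChiSqMoment d (n + 1)
      ≤ (((n : ℝ) + 1) * (η / (n + 1))) ^ d + ((n : ℝ) + 1) ^ d *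
          (c * (gaussianReal 0 1).real {y | η / (n + 1) < y ^ 2} ^ n) :=
        scaledMinChiSqMoment_succ_le hd.le (by positivity) n
    _ ≤ η ^ d + c * (((n : ℝ) + 1) ^ d * exp (n * -(C * √η / √((n : ℝ) + 1)))) := by
        rw [mul_div_cancel₀ _ hN.ne', mul_left_comm]
        gcongr
    _ < ε := by linarith

/-- Let `d > 0`. For every `ε₀ > 0` there exists `N₀` such that for every
`N ≥ N₀`: if `α_1, …, α_N` are independent standard Gaussian random variables, `ζ_i = α_i²`,
and `ζ_min = min_i ζ_i`, then `E[ζ_1^d] / E[(N ζ_min)^d] ≥ 1 / (1 + ε₀)`. -/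
theorem chiSq_min_moment_ratio (d : ℝ) (hd : 0 < d) :
    ∀ ε₀ : ℝ, 0 < ε₀ → ∃ N₀ : ℕ, ∀ N : ℕ, N₀ ≤ N → ∀ (hN : 0 < N),
      ∀ (Ω : Type) (_ : MeasurableSpace Ω) (P : Measure Ω), IsProbabilityMeasure P →
        ∀ α : Fin N → Ω → ℝ,
          iIndepFun α P →
          (∀ i, P.map (α i) = gaussianReal 0 1) →
          (∫ ω, ((α ⟨0, hN⟩ ω) ^ 2) ^ d ∂P) /
              (∫ ω, ((N : ℝ) * ⨅ i : Fin N, (α i ω) ^ 2) ^ d ∂P)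
            ≥ 1 / (1 + ε₀) := by
  intro ε₀ hε₀
  obtain ⟨N₀, hN₀⟩ := eventually_atTop.1 ((tendsto_scaledMinChiSqMoment hd).eventually
    (gt_mem_nhds (integral_sq_rpow_gaussianReal_pos 0 one_ne_zero hd.le)))
  refine ⟨N₀, fun N hN₀N hN Ω _ P _ α hα hlaw => ?_⟩
  have hmeas : Measurable fun y : ℝ => (y ^ 2) ^ d := by fun_prop
  have hnum : ∫ ω, ((α ⟨0, hN⟩ ω) ^ 2) ^ d ∂P = ∫ y, (y ^ 2) ^ d ∂gaussianReal 0 1 :=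
    (hα.integral_comp_eq_integral_pi hlaw (F := fun x => (x ⟨0, hN⟩ ^ 2) ^ d)
      (hmeas.comp (measurable_pi_apply _)).aestronglyMeasurable).trans
      (integral_comp_eval (μ := fun _ : Fin N => gaussianReal 0 1) (i := ⟨0, hN⟩)
        hmeas.aestronglyMeasurable)
  have hden : ∫ ω, ((N : ℝ) * ⨅ i, α i ω ^ 2) ^ d ∂P = scaledMinChiSqMoment d N :=
    hα.integral_comp_eq_integral_pi hlaw (measurable_rpow_mul_iInf_sq N _ d).aestronglyMeasurable
  rw [hnum, hden, ge_iff_le]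
  calc 1 / (1 + ε₀) ≤ 1 := by rw [div_le_one (by linarith)]; linarith
    _ ≤ _ := (one_le_div (scaledMinChiSqMoment_pos hd.le hN)).2 (hN₀ N hN₀N).le
end

section
/- Let p > 0 and q > 0 be real numbers. Then there exists a real constant α such that ∫_0^φ ∫_0^φ sgn(y − x) e^{−x/2} e^{−y/2} x^{p−1} y^{q−1} (φ − x)(φ − y) dx dy = α φ^{p+q+2} + o(φ^{p+q+2}) as φ → 0⁺. -/
/-!
Substituting `x = φ u`, `y = φ v` turns the integral into `φ ^ (p + q + 2)` times an integral of
the same shape over `[0, 1]²`, in which `φ` only survives in the weights `e^{-φu/2} e^{-φv/2}`.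
For `φ ≥ 0` the new integrand is dominated by `u ^ (p - 1) v ^ (q - 1)`, which is integrable
since `p, q > 0`, so by dominated convergence the rescaled integral is continuous at `φ = 0`;
its value there is `α`.
-/

open Filter MeasureTheory

/-- `sgn t` is `1` for `t ≥ 0` and `-1` for `t < 0`. -/
noncomputable def sgn (t : ℝ) : ℝ := if 0 ≤ t then 1 else -1

open Set Real Topology

lemma sgn_mul_sub_mul {c : ℝ} (hc : 0 < c) (a b : ℝ) : sgn (c * a - c * b) = sgn (a - b) := by
  simp only [sgn, ← mul_sub, mul_nonneg_iff_of_pos_left hc]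

lemma abs_sgn_le_one (t : ℝ) : |sgn t| ≤ 1 := by
  unfold sgn; split <;> norm_num

@[fun_prop]
lemma measurable_sgn : Measurable sgn :=
  Measurable.ite measurableSet_Ici measurable_const measurable_const

lemma setIntegral_Icc_zero_eq_smul {E : Type*} [NormedAddCommGroup E] [NormedSpace ℝ E]
    (g : ℝ → E) {φ : ℝ} (hφ : 0 < φ) :
    ∫ x in Icc 0 φ, g x = φ • ∫ u in Icc 0 1, g (φ * u) := by
  rw [integral_Icc_eq_integral_Ioc, integral_Icc_eq_integral_Ioc,
    ← intervalIntegral.integral_of_le hφ.le, ← intervalIntegral.integral_of_le zero_le_one,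
    intervalIntegral.integral_comp_mul_left g hφ.ne', smul_smul, mul_inv_cancel₀ hφ.ne',
    one_smul, mul_zero, mul_one]

lemma integrableOn_rpow_sub_one {r : ℝ} (hr : 0 < r) :
    IntegrableOn (fun x : ℝ => x ^ (r - 1)) (Icc 0 1) :=
  (integrableOn_Icc_iff_integrableOn_Ioc).mpr
    (intervalIntegral.intervalIntegrable_rpow' (by linarith)).1

/-- The integrand of the theorem is `sgnKernel p q 1 φ`; rescaling `[0, φ]` to `[0, 1]` moves
`φ` into the rate `c` of the exponential weight. -/
noncomputable def sgnKernel (p q c φ x y : ℝ) : ℝ :=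
  sgn (y - x) * exp (-(c * x) / 2) * exp (-(c * y) / 2) * x ^ (p - 1) * y ^ (q - 1)
    * (φ - x) * (φ - y)

noncomputable def sgnKernelIntegral (p q c φ : ℝ) : ℝ :=
  ∫ y in Icc 0 φ, ∫ x in Icc 0 φ, sgnKernel p q c φ x y

section

variable {p q : ℝ}

lemma sgnKernel_mul_mul {φ x y : ℝ} (hφ : 0 < φ) (hx : 0 ≤ x) (hy : 0 ≤ y) :
    sgnKernel p q 1 φ (φ * x) (φ * y) = φ ^ (p + q) * sgnKernel p q φ 1 x y := by
  rw [show p + q = (p - 1) + (q - 1) + 2 by ring, rpow_add hφ, rpow_add hφ, rpow_two]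
  simp only [sgnKernel, sgn_mul_sub_mul hφ, mul_rpow hφ.le hx, mul_rpow hφ.le hy, one_mul]
  ring

lemma sgnKernelIntegral_one_eq {φ : ℝ} (hφ : 0 < φ) :
    sgnKernelIntegral p q 1 φ = φ ^ (p + q + 2) * sgnKernelIntegral p q φ 1 := by
  have inner (y : ℝ) : ∫ x in Icc 0 φ, sgnKernel p q 1 φ x y
      = φ * ∫ u in Icc 0 1, sgnKernel p q 1 φ (φ * u) y :=
    setIntegral_Icc_zero_eq_smul _ hφ
  calc sgnKernelIntegral p q 1 φ
      = φ * ∫ v in Icc 0 1, φ * ∫ u in Icc 0 1, sgnKernel p q 1 φ (φ * u) (φ * v) := by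
        simp only [sgnKernelIntegral, inner, setIntegral_Icc_zero_eq_smul _ hφ, smul_eq_mul]
    _ = φ * ∫ v in Icc 0 1, φ * ∫ u in Icc 0 1, φ ^ (p + q) * sgnKernel p q φ 1 u v := by
        congr 1
        refine setIntegral_congr_fun measurableSet_Icc fun v hv => ?_
        congr 1
        exact setIntegral_congr_fun measurableSet_Icc fun u hu => sgnKernel_mul_mul hφ hu.1 hv.1
    _ = φ ^ (p + q + 2) * sgnKernelIntegral p q φ 1 := by
        simp only [integral_const_mul, sgnKernelIntegral, rpow_add hφ, rpow_two]
        ring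

lemma abs_sgnKernel_le {c x y : ℝ} (hc : 0 ≤ c) (hx : x ∈ Icc 0 1) (hy : y ∈ Icc 0 1) :
    |sgnKernel p q c 1 x y| ≤ x ^ (p - 1) * y ^ (q - 1) := by
  obtain ⟨hx₀, hx₁⟩ := hx
  obtain ⟨hy₀, hy₁⟩ := hy
  have hex : exp (-(c * x) / 2) ≤ 1 := exp_le_one_iff.mpr (by nlinarith)
  have hey : exp (-(c * y) / 2) ≤ 1 := exp_le_one_iff.mpr (by nlinarith)
  calc |sgnKernel p q c 1 x y|
      = |sgn (y - x)| * exp (-(c * x) / 2) * exp (-(c * y) / 2) * x ^ (p - 1) * y ^ (q - 1)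
          * (1 - x) * (1 - y) := by
        simp only [sgnKernel, abs_mul, abs_exp, abs_of_nonneg (rpow_nonneg hx₀ _),
          abs_of_nonneg (rpow_nonneg hy₀ _), abs_of_nonneg (sub_nonneg.2 hx₁),
          abs_of_nonneg (sub_nonneg.2 hy₁)]
    _ ≤ 1 * 1 * 1 * x ^ (p - 1) * y ^ (q - 1) * 1 * 1 := by
        gcongr
        exacts [abs_sgn_le_one _, by linarith, by linarith]
    _ = x ^ (p - 1) * y ^ (q - 1) := by ring

lemma continuousOn_sgnKernelIntegral (hp : 0 < p) (hq : 0 < q) :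
    ContinuousOn (fun c => sgnKernelIntegral p q c 1) (Ici 0) := by
  set μ := volume.restrict (Icc (0 : ℝ) 1)
  have hmem : ∀ᵐ z ∂μ.prod μ, z ∈ Icc 0 1 ×ˢ Icc 0 1 := by
    rw [Measure.prod_restrict]
    exact ae_restrict_mem (measurableSet_Icc.prod measurableSet_Icc)
  have hbound (c : ℝ) (hc : c ∈ Ici 0) :
      ∀ᵐ z ∂μ.prod μ, ‖sgnKernel p q c 1 z.2 z.1‖ ≤ z.2 ^ (p - 1) * z.1 ^ (q - 1) := by
    filter_upwards [hmem] with z hz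
    exact abs_sgnKernel_le hc hz.2 hz.1
  have hint : Integrable (fun z : ℝ × ℝ => z.2 ^ (p - 1) * z.1 ^ (q - 1)) (μ.prod μ) := by
    simpa only [mul_comm] using
      (integrableOn_rpow_sub_one hq).mul_prod (integrableOn_rpow_sub_one hp)
  have hmeas (c : ℝ) :
      AEStronglyMeasurable (fun z : ℝ × ℝ => sgnKernel p q c 1 z.2 z.1) (μ.prod μ) := by
    unfold sgnKernel
    fun_prop
  refine (continuousOn_of_dominated (fun c _ => hmeas c) hbound hint
    (ae_of_all _ fun z => ?_)).congr fun c hc => ?_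
  · unfold sgnKernel
    fun_prop
  · exact integral_integral (f := fun y x => sgnKernel p q c 1 x y)
      (hint.mono' (hmeas c) (hbound c hc))

end

/-- Let `p, q > 0`. Then there is a real constant `α` such that
`∫_0^φ ∫_0^φ sgn(y-x) e^{-x/2} e^{-y/2} x^{p-1} y^{q-1} (φ-x)(φ-y) dx dy
  = α φ^{p+q+2} + o(φ^{p+q+2})` as `φ → 0⁺`. -/
theorem double_integral_sgn_asymptotic (p q : ℝ) (hp : 0 < p) (hq : 0 < q) :
    ∃ α : ℝ, Tendsto (fun φ : ℝ =>
        ((∫ y in Set.Icc (0 : ℝ) φ, ∫ x in Set.Icc (0 : ℝ) φ,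
            sgn (y - x) * Real.exp (-x / 2) * Real.exp (-y / 2)
              * x ^ (p - 1) * y ^ (q - 1) * (φ - x) * (φ - y))
          - α * φ ^ (p + q + 2)) / φ ^ (p + q + 2))
      (nhdsWithin 0 (Set.Ioi 0)) (nhds 0) := by
  refine ⟨sgnKernelIntegral p q 0 1, ?_⟩
  have hlim : Tendsto (fun φ => sgnKernelIntegral p q φ 1 - sgnKernelIntegral p q 0 1)
      (𝓝[>] 0) (𝓝 0) := by
    have hcont := (continuousOn_sgnKernelIntegral hp hq 0 self_mem_Ici).tendsto.mono_left
      (nhdsWithin_mono _ Ioi_subset_Ici_self)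
    simpa using hcont.sub_const (sgnKernelIntegral p q 0 1)
  refine hlim.congr' ?_
  filter_upwards [self_mem_nhdsWithin] with φ (hφ : 0 < φ)
  have hI : (∫ y in Icc 0 φ, ∫ x in Icc 0 φ, sgn (y - x) * exp (-x / 2) * exp (-y / 2)
      * x ^ (p - 1) * y ^ (q - 1) * (φ - x) * (φ - y)) = sgnKernelIntegral p q 1 φ := by
    simp only [sgnKernelIntegral, sgnKernel, one_mul]
  rw [hI, sgnKernelIntegral_one_eq hφ]
  field_simp [(rpow_pos_of_pos hφ (p + q + 2)).ne']
end

section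
/- Let a > 0 be a real number and let ℓ be a positive integer. Then ∫_0^∞ ∫_0^∞ sgn(y − x) e^{−x/2} x^{a−1} e^{−y/2} y^{a+ℓ−1} dx dy = 2^{2a+ℓ+1} Γ(a) Γ(a+ℓ) Σ_{k=1}^{ℓ} 2^{−(2a+ℓ−k)} Γ(2a+ℓ−k) / (Γ(a) Γ(a+ℓ−k+1)). -/
/-!
Let `S(y) = ∫₀^∞ sgn(y - x) e^{-x/2} x^{a-1} dx`. Then `S' = 2 e^{-y/2} y^{a-1}`,
`S(0⁺) = -2^a Γ(a)` and `S(∞) = 2^a Γ(a)`, so for `D(c) = ∫₀^∞ S(y) e^{-y/2} y^{c-1} dy`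
integration by parts gives `D(a) = 0` (the boundary terms of `S²` cancel) and
`D(c + 1) = 2c D(c) + 4 Γ(a + c)`, the last term being `∫₀^∞ e^{-y} y^{a+c-1} dy`.
Solving this recurrence for `D(a + ℓ) / Γ(a + ℓ)` gives the formula.
-/

open Filter MeasureTheory Finset

open Set Real Topology

theorem eq_sum_Icc_of_succ_eq_mul_add {R : Type*} [CommSemiring R] {E g : ℕ → R} (r : R)
    (h0 : E 0 = 0) (hsucc : ∀ m, E (m + 1) = r * E m + g m) (m : ℕ) :
    E m = ∑ k ∈ Icc 1 m, r ^ (k - 1) * g (m - k) := by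
  have hrange : ∀ m, E m = ∑ i ∈ range m, r ^ i * g (m - 1 - i) := by
    intro m
    induction m with
    | zero => simp [h0]
    | succ m ih =>
      rw [hsucc, ih, sum_range_succ', mul_sum]
      simp only [pow_succ', mul_assoc, pow_zero, one_mul, add_tsub_cancel_right, tsub_zero]
      congr 2 with i
      rw [Nat.sub_sub, Nat.add_comm i 1, ← Nat.sub_sub]
  rw [hrange, ← Finset.Ico_add_one_right_eq_Icc, sum_Ico_eq_sum_range, add_tsub_cancel_right]
  refine sum_congr rfl fun i _ => ?_
  rw [add_tsub_cancel_left, Nat.sub_sub, Nat.add_comm 1 i]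

namespace SgnGamma

/-- The unnormalised density of the Gamma distribution with shape `c` and rate `1 / 2`. -/
noncomputable def gammaKernel (c x : ℝ) : ℝ := exp (-x / 2) * x ^ (c - 1)

noncomputable def signedMass (a y : ℝ) : ℝ := ∫ x in Ioi 0, sgn (y - x) * gammaKernel a x

noncomputable def sgnPairing (a c : ℝ) : ℝ :=
  ∫ y in Ioi 0, ∫ x in Ioi 0, sgn (y - x) * gammaKernel a x * gammaKernel c y

variable {a c : ℝ}

theorem gammaKernel_nonneg {x : ℝ} (hx : 0 ≤ x) : 0 ≤ gammaKernel c x := by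
  unfold gammaKernel; positivity

theorem integral_gammaKernel (hc : 0 < c) :
    ∫ x in Ioi 0, gammaKernel c x = 2 ^ c * Gamma c := by
  have h := integral_rpow_mul_exp_neg_mul_Ioi hc one_half_pos
  rw [one_div_one_div] at h
  rw [← h]
  refine setIntegral_congr_fun measurableSet_Ioi fun x _ => ?_
  simp only [gammaKernel]; ring_nf

theorem integrableOn_gammaKernel (hc : 0 < c) : IntegrableOn (gammaKernel c) (Ioi 0) :=
  .of_integral_ne_zero (by rw [integral_gammaKernel hc]; positivity)

theorem continuousOn_gammaKernel : ContinuousOn (gammaKernel c) (Ioi 0) :=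
  (continuous_exp.comp (by fun_prop)).continuousOn.mul
    (continuousOn_id.rpow_const fun x hx => Or.inl (ne_of_gt hx))

theorem hasDerivAt_gammaKernel_add_one {y : ℝ} (hy : 0 < y) :
    HasDerivAt (gammaKernel (c + 1)) (c * gammaKernel c y - gammaKernel (c + 1) y / 2) y := by
  have hexp : HasDerivAt (fun y : ℝ => exp (-y / 2)) (exp (-y / 2) * (-1 / 2)) y :=
    (hasDerivAt_exp _).comp y (((hasDerivAt_id y).neg).div_const 2)
  have hkernel : gammaKernel (c + 1) = fun x => exp (-x / 2) * x ^ c := by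
    ext x; rw [gammaKernel, add_sub_cancel_right]
  have hprod : HasDerivAt (fun x => exp (-x / 2) * x ^ c)
      (exp (-y / 2) * (-1 / 2) * y ^ c + exp (-y / 2) * (c * y ^ (c - 1))) y :=
    hexp.mul (hasDerivAt_rpow_const (Or.inl hy.ne'))
  rw [hkernel]
  convert hprod using 1
  simp only [gammaKernel]; ring

theorem tendsto_gammaKernel_add_one_nhdsGT (hc : 0 < c) :
    Tendsto (gammaKernel (c + 1)) (𝓝[>] 0) (𝓝 0) := by
  have hcont : Continuous (gammaKernel (c + 1)) :=
    (continuous_exp.comp (by fun_prop)).mul (continuous_id.rpow_const fun _ => Or.inr (by linarith))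
  simpa [gammaKernel, zero_rpow hc.ne'] using (hcont.tendsto 0).mono_left nhdsWithin_le_nhds

theorem tendsto_gammaKernel_atTop (c : ℝ) : Tendsto (gammaKernel c) atTop (𝓝 0) := by
  refine (tendsto_rpow_mul_exp_neg_mul_atTop_nhds_zero (c - 1) (1 / 2) one_half_pos).congr
    fun x => ?_
  simp only [gammaKernel]; ring_nf

theorem integral_gammaKernel_mul_gammaKernel_add_one (h : 0 < a + c) :
    ∫ y in Ioi 0, gammaKernel a y * gammaKernel (c + 1) y = Gamma (a + c) := by
  rw [Gamma_eq_integral h]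
  refine setIntegral_congr_fun measurableSet_Ioi fun y (hy : 0 < y) => ?_
  have hexp : exp (-y / 2) * exp (-y / 2) = exp (-y) := by rw [← exp_add]; ring_nf
  have hpow : y ^ (a - 1) * y ^ (c + 1 - 1) = y ^ (a + c - 1) := by
    rw [← rpow_add hy]; ring_nf
  simp only [gammaKernel]
  rw [← hexp, ← hpow]; ring

theorem abs_sgn (t : ℝ) : |sgn t| = 1 := by
  unfold sgn; split_ifs <;> simp

theorem abs_signedMass_le (ha : 0 < a) (y : ℝ) : |signedMass a y| ≤ 2 ^ a * Gamma a := by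
  rw [← integral_gammaKernel ha, ← Real.norm_eq_abs]
  refine norm_integral_le_of_norm_le (integrableOn_gammaKernel ha) ?_
  refine (ae_restrict_iff' measurableSet_Ioi).2 (ae_of_all _ fun x (hx : 0 < x) => ?_)
  rw [norm_mul, Real.norm_eq_abs, abs_sgn, one_mul, Real.norm_of_nonneg (gammaKernel_nonneg hx.le)]

theorem signedMass_eq (ha : 0 < a) {y : ℝ} (hy : 0 ≤ y) :
    signedMass a y = 2 * (∫ x in 0..y, gammaKernel a x) - 2 ^ a * Gamma a := by
  have hsplit : ∀ x, sgn (y - x) * gammaKernel a x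
      = 2 * (Iic y).indicator (gammaKernel a) x - gammaKernel a x := by
    intro x
    by_cases hxy : x ≤ y
    · simp [sgn, hxy]; ring
    · simp [sgn, hxy]
  have hint := integrableOn_gammaKernel ha
  rw [signedMass, funext hsplit, integral_sub ((hint.indicator measurableSet_Iic).const_mul 2) hint,
    integral_const_mul, setIntegral_indicator measurableSet_Iic, Ioi_inter_Iic,
    integral_gammaKernel ha, intervalIntegral.integral_of_le hy]

theorem hasDerivAt_signedMass (ha : 0 < a) {y : ℝ} (hy : 0 < y) :
    HasDerivAt (signedMass a) (2 * gammaKernel a y) y := by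
  have hint : IntervalIntegrable (gammaKernel a) volume 0 y :=
    (intervalIntegrable_iff_integrableOn_Ioc_of_le hy.le).2
      ((integrableOn_gammaKernel ha).mono_set Ioc_subset_Ioi_self)
  have hprim : HasDerivAt (fun u => ∫ x in 0..u, gammaKernel a x) (gammaKernel a y) y :=
    intervalIntegral.integral_hasDerivAt_right hint
      (continuousOn_gammaKernel.stronglyMeasurableAtFilter isOpen_Ioi y hy)
      (continuousOn_gammaKernel.continuousAt (Ioi_mem_nhds hy))
  refine ((hprim.const_mul 2).sub_const (2 ^ a * Gamma a)).congr_of_eventuallyEq ?_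
  filter_upwards [Ioi_mem_nhds hy] with u hu using signedMass_eq ha (le_of_lt hu)

theorem tendsto_signedMass_nhdsGT (ha : 0 < a) :
    Tendsto (signedMass a) (𝓝[>] 0) (𝓝 (-(2 ^ a * Gamma a))) := by
  have hint : IntegrableOn (gammaKernel a) (uIcc 0 1) := by
    rw [Set.uIcc_of_le zero_le_one, integrableOn_Icc_iff_integrableOn_Ioc]
    exact (integrableOn_gammaKernel ha).mono_set Ioc_subset_Ioi_self
  have hprim : ContinuousWithinAt (fun u => ∫ x in 0..u, gammaKernel a x) (Ici 0) 0 := by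
    rw [ContinuousWithinAt, ← nhdsWithin_Icc_eq_nhdsGE zero_lt_one, ← Set.uIcc_of_le zero_le_one]
    exact intervalIntegral.continuousOn_primitive_interval hint 0 left_mem_uIcc
  have hlim : Tendsto (fun u => 2 * (∫ x in 0..u, gammaKernel a x) - 2 ^ a * Gamma a)
      (𝓝[>] 0) (𝓝 (-(2 ^ a * Gamma a))) := by
    simpa using ((hprim.const_mul 2).sub_const (2 ^ a * Gamma a)).mono_left
      (nhdsWithin_mono 0 Ioi_subset_Ici_self)
  refine hlim.congr' ?_
  filter_upwards [self_mem_nhdsWithin] with y (hy : 0 < y) using (signedMass_eq ha hy.le).symm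

theorem tendsto_signedMass_atTop (ha : 0 < a) :
    Tendsto (signedMass a) atTop (𝓝 (2 ^ a * Gamma a)) := by
  have hprim := intervalIntegral_tendsto_integral_Ioi 0 (integrableOn_gammaKernel ha) tendsto_id
  rw [integral_gammaKernel ha] at hprim
  have hlim := (hprim.const_mul 2).sub_const (2 ^ a * Gamma a)
  rw [two_mul, add_sub_cancel_right] at hlim
  refine hlim.congr' ?_
  filter_upwards [eventually_ge_atTop 0] with y hy using (signedMass_eq ha hy).symm

theorem integrableOn_signedMass_mul_gammaKernel (ha : 0 < a) (hc : 0 < c) :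
    IntegrableOn (fun y => signedMass a y * gammaKernel c y) (Ioi 0) :=
  (integrableOn_gammaKernel hc).bdd_mul
    (ContinuousOn.aestronglyMeasurable
      (fun _ hy => (hasDerivAt_signedMass ha hy).continuousAt.continuousWithinAt) measurableSet_Ioi)
    (ae_of_all _ fun y => (Real.norm_eq_abs _).trans_le (abs_signedMass_le ha y))

theorem sgnPairing_eq_integral_signedMass_mul (a c : ℝ) :
    sgnPairing a c = ∫ y in Ioi 0, signedMass a y * gammaKernel c y := by
  simp only [sgnPairing, signedMass, integral_mul_const]

theorem sgnPairing_self (ha : 0 < a) : sgnPairing a a = 0 := by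
  have hS := tendsto_signedMass_nhdsGT ha
  have hint := (integrableOn_signedMass_mul_gammaKernel ha ha).const_mul 2
  have hswap : ∀ y, 2 * gammaKernel a y * signedMass a y
      = 2 * (signedMass a y * gammaKernel a y) := fun y => by ring
  have hparts := integral_Ioi_mul_deriv_eq_deriv_mul (fun y hy => hasDerivAt_signedMass ha hy)
    (fun y hy => hasDerivAt_signedMass ha hy)
    (IntegrableOn.congr_fun hint (fun y _ => by simp only [Pi.mul_apply]; ring) measurableSet_Ioi)
    (IntegrableOn.congr_fun hint (fun y _ => (hswap y).symm) measurableSet_Ioi)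
    (hS.mul hS) ((tendsto_signedMass_atTop ha).mul (tendsto_signedMass_atTop ha))
  simp only [hswap, mul_left_comm _ (2 : ℝ), integral_const_mul, neg_mul_neg, sub_self,
    zero_sub] at hparts
  rw [sgnPairing_eq_integral_signedMass_mul]
  linarith

theorem sgnPairing_add_one (ha : 0 < a) (hc : 0 < c) :
    sgnPairing a (c + 1) = 2 * c * sgnPairing a c + 4 * Gamma (a + c) := by
  have hint := integrableOn_signedMass_mul_gammaKernel ha hc
  have hint' := integrableOn_signedMass_mul_gammaKernel ha (c := c + 1) (by linarith)
  have hΓ : IntegrableOn (fun y => gammaKernel a y * gammaKernel (c + 1) y) (Ioi 0) :=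
    .of_integral_ne_zero (by
      rw [integral_gammaKernel_mul_gammaKernel_add_one (by linarith)]
      exact (Gamma_pos_of_pos (by linarith)).ne')
  have hparts := integral_Ioi_mul_deriv_eq_deriv_mul (fun y hy => hasDerivAt_signedMass ha hy)
    (fun y hy => hasDerivAt_gammaKernel_add_one hy)
    (IntegrableOn.congr_fun ((hint.const_mul c).sub (hint'.div_const 2))
      (fun y _ => by simp only [Pi.mul_apply, Pi.sub_apply]; ring) measurableSet_Ioi)
    (IntegrableOn.congr_fun (hΓ.const_mul 2)
      (fun y _ => by simp only [Pi.mul_apply]; ring) measurableSet_Ioi)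
    ((tendsto_signedMass_nhdsGT ha).mul (tendsto_gammaKernel_add_one_nhdsGT hc))
    ((tendsto_signedMass_atTop ha).mul (tendsto_gammaKernel_atTop (c + 1)))
  have hlhs : ∫ y in Ioi 0, signedMass a y * (c * gammaKernel c y - gammaKernel (c + 1) y / 2)
      = c * sgnPairing a c - sgnPairing a (c + 1) / 2 := by
    rw [sgnPairing_eq_integral_signedMass_mul, sgnPairing_eq_integral_signedMass_mul,
      ← integral_const_mul, ← integral_div, ← integral_sub (hint.const_mul c) (hint'.div_const 2)]
    congr 1 with y
    ring
  have hrhs : ∫ y in Ioi 0, 2 * gammaKernel a y * gammaKernel (c + 1) y = 2 * Gamma (a + c) := by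
    simp only [mul_assoc, integral_const_mul,
      integral_gammaKernel_mul_gammaKernel_add_one (show 0 < a + c by linarith)]
  rw [hlhs, hrhs, mul_zero, mul_zero, sub_zero, zero_sub] at hparts
  linarith

theorem sgnPairing_add_nat (ha : 0 < a) (l : ℕ) :
    sgnPairing a (a + l) = Gamma (a + l) * ∑ k ∈ Icc 1 l,
      2 ^ (k - 1) * (4 * Gamma (2 * a + (l - k : ℕ)) / Gamma (a + (l - k : ℕ) + 1)) := by
  have hΓ : ∀ m : ℕ, Gamma (a + m) ≠ 0 := fun m => (Gamma_pos_of_pos (by positivity)).ne'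
  rw [← eq_sum_Icc_of_succ_eq_mul_add (E := fun m : ℕ => sgnPairing a (a + m) / Gamma (a + m))
    (g := fun m : ℕ => 4 * Gamma (2 * a + m) / Gamma (a + m + 1)) 2, mul_div_cancel₀ _ (hΓ l)]
  · simp [sgnPairing_self ha]
  · intro m
    have hm : 0 < a + m := by positivity
    rw [Nat.cast_succ, ← add_assoc, sgnPairing_add_one ha hm, Gamma_add_one hm.ne',
      show a + (a + m) = 2 * a + m by ring]
    field_simp [hΓ m]

end SgnGamma

theorem double_integral_sgn_gamma_general (a : ℝ) (ha : 0 < a) (l : ℕ) :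
    (∫ y in Set.Ioi (0 : ℝ), ∫ x in Set.Ioi (0 : ℝ),
        sgn (y - x) * (Real.exp (-x / 2) * x ^ (a - 1))
          * (Real.exp (-y / 2) * y ^ (a + (l : ℝ) - 1)))
      = (2 : ℝ) ^ (2 * a + (l : ℝ) + 1) * Real.Gamma a * Real.Gamma (a + (l : ℝ)) *
          ∑ k ∈ Finset.Icc 1 l,
            (2 : ℝ) ^ (-(2 * a + (l : ℝ) - (k : ℝ)))
              * Real.Gamma (2 * a + (l : ℝ) - (k : ℝ))
              / (Real.Gamma a * Real.Gamma (a + (l : ℝ) - (k : ℝ) + 1)) := by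
  change SgnGamma.sgnPairing a (a + l) = _
  rw [SgnGamma.sgnPairing_add_nat ha, mul_sum, mul_sum]
  refine sum_congr rfl fun k hk => ?_
  obtain ⟨hk1, hkl⟩ := mem_Icc.1 hk
  have hpow : (2 : ℝ) ^ (2 * a + l + 1) * 2 ^ (-(2 * a + l - k)) = 2 ^ (k - 1) * 4 := by
    rw [← rpow_add two_pos, show 2 * a + l + 1 + -(2 * a + l - k) = ((k - 1 + 2 : ℕ) : ℝ) by
      push_cast [Nat.cast_sub hk1]; ring, rpow_natCast, pow_add]
    norm_num
  rw [Nat.cast_sub hkl, ← add_sub_assoc, ← add_sub_assoc, ← mul_div_assoc, ← mul_assoc, ← hpow]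
  have hΓa := (Gamma_pos_of_pos ha).ne'
  field_simp

/-- Let `a > 0` and let `ℓ` be a positive integer. Then
`∫_0^∞ ∫_0^∞ sgn(y-x) e^{-x/2} x^{a-1} e^{-y/2} y^{a+ℓ-1} dx dy
  = 2^{2a+ℓ+1} Γ(a) Γ(a+ℓ) ∑_{k=1}^ℓ 2^{-(2a+ℓ-k)} Γ(2a+ℓ-k) / (Γ(a) Γ(a+ℓ-k+1))`. -/
theorem double_integral_sgn_gamma (a : ℝ) (ha : 0 < a) (l : ℕ) (hl : 0 < l) :
    (∫ y in Set.Ioi (0 : ℝ), ∫ x in Set.Ioi (0 : ℝ),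
        sgn (y - x) * (Real.exp (-x / 2) * x ^ (a - 1))
          * (Real.exp (-y / 2) * y ^ (a + (l : ℝ) - 1)))
      = (2 : ℝ) ^ (2 * a + (l : ℝ) + 1) * Real.Gamma a * Real.Gamma (a + (l : ℝ)) *
          ∑ k ∈ Finset.Icc 1 l,
            (2 : ℝ) ^ (-(2 * a + (l : ℝ) - (k : ℝ)))
              * Real.Gamma (2 * a + (l : ℝ) - (k : ℝ))
              / (Real.Gamma a * Real.Gamma (a + (l : ℝ) - (k : ℝ) + 1)) :=
  double_integral_sgn_gamma_general a ha l
end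

section
/- Let k be a positive integer, let G be a chi-squared random variable with k degrees of freedom, and let ξ be a positive random variable independent of G with E[ξ^{−k/2}] < ∞. Then for every c > 0, lim_{s→∞} s^{k/2} · Pr(G ≤ c/(s ξ)) = c^{k/2} E[ξ^{−k/2}] / ((k/2) 2^{k/2} Γ(k/2)). -/
open Filter MeasureTheory ProbabilityTheory Topology

/-!
Conditioning on `ξ`, independence gives `Pr(G ≤ c/(sξ)) = E[F(c/(sξ))]`, where `F` is the CDF
of `G`. Since `1 - t/2 ≤ e^{-t/2} ≤ 1`, the chi-squared CDF satisfies `F x ≤ x^{k/2}/((k/2) C)`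
for `x ≥ 0` and `F x ~ x^{k/2}/((k/2) C)` as `x → 0⁺`, where `C = 2^{k/2} Γ(k/2)`. Hence
`s^{k/2} F(c/(sξ))` tends to `c^{k/2} ξ^{-k/2}/((k/2) C)` pointwise and is dominated by that same
integrable function, so dominated convergence applies.
-/

section LowerGamma

open intervalIntegral

variable {a : ℝ}

lemma integral_rpow_sub_one (ha : 0 < a) (x : ℝ) :
    ∫ t in (0 : ℝ)..x, t ^ (a - 1) = x ^ a / a := by
  rw [integral_rpow (Or.inl (by linarith)), sub_add_cancel, Real.zero_rpow ha.ne', sub_zero]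

lemma intervalIntegrable_rpow_sub_one_mul_exp (ha : 0 < a) (x : ℝ) :
    IntervalIntegrable (fun t => t ^ (a - 1) * Real.exp (-t / 2)) volume 0 x :=
  (intervalIntegrable_rpow' (by linarith)).mul_continuousOn (by fun_prop)

lemma integral_rpow_sub_one_mul_exp_le (ha : 0 < a) {x : ℝ} (hx : 0 ≤ x) :
    ∫ t in (0 : ℝ)..x, t ^ (a - 1) * Real.exp (-t / 2) ≤ x ^ a / a := by
  rw [← integral_rpow_sub_one ha]
  refine integral_mono_on hx (intervalIntegrable_rpow_sub_one_mul_exp ha x)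
    (intervalIntegrable_rpow' (by linarith)) fun t ht => ?_
  exact mul_le_of_le_one_right (Real.rpow_nonneg ht.1 _)
    (Real.exp_le_one_iff.mpr (by linarith [ht.1]))

lemma sub_le_integral_rpow_sub_one_mul_exp (ha : 0 < a) {x : ℝ} (hx : 0 ≤ x) :
    x ^ a / a - x ^ (a + 1) / (2 * (a + 1)) ≤
      ∫ t in (0 : ℝ)..x, t ^ (a - 1) * Real.exp (-t / 2) := by
  have hsplit : ∫ t in (0 : ℝ)..x, (t ^ (a - 1) - t ^ a / 2) =
      x ^ a / a - x ^ (a + 1) / (2 * (a + 1)) := by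
    rw [integral_sub (intervalIntegrable_rpow' (by linarith))
      ((intervalIntegrable_rpow' (by linarith)).div_const 2), integral_rpow_sub_one ha,
      intervalIntegral.integral_div, integral_rpow (Or.inl (by linarith)),
      Real.zero_rpow (by linarith), sub_zero, div_div, mul_comm (a + 1)]
  rw [← hsplit]
  refine integral_mono_on hx ((intervalIntegrable_rpow' (by linarith)).sub
    ((intervalIntegrable_rpow' (by linarith)).div_const 2))
    (intervalIntegrable_rpow_sub_one_mul_exp ha x) fun t ht => ?_
  have hta : t ^ a = t ^ (a - 1) * t := by
    rw [← Real.rpow_add_one' ht.1 (by linarith), sub_add_cancel]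
  have hexp : 1 - t / 2 ≤ Real.exp (-t / 2) := by linarith [Real.add_one_le_exp (-t / 2)]
  rw [hta]
  nlinarith [Real.rpow_nonneg ht.1 (a - 1)]

lemma tendsto_rpow_neg_mul_integral_rpow_sub_one_mul_exp (ha : 0 < a) :
    Tendsto (fun x => x ^ (-a) * ∫ t in (0 : ℝ)..x, t ^ (a - 1) * Real.exp (-t / 2))
      (𝓝[>] 0) (𝓝 (1 / a)) := by
  have hlower : Tendsto (fun x : ℝ => 1 / a - x / (2 * (a + 1))) (𝓝[>] 0) (𝓝 (1 / a)) :=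
    tendsto_nhdsWithin_of_tendsto_nhds
      ((by fun_prop : Continuous fun x : ℝ => 1 / a - x / (2 * (a + 1))).tendsto' 0 _ (by simp))
  refine tendsto_of_tendsto_of_tendsto_of_le_of_le' hlower tendsto_const_nhds ?_ ?_
  all_goals filter_upwards [self_mem_nhdsWithin] with x (hx : 0 < x)
  · calc 1 / a - x / (2 * (a + 1))
        = x ^ (-a) * (x ^ a / a - x ^ (a + 1) / (2 * (a + 1))) := by
          have : x ^ a ≠ 0 := by positivity
          rw [Real.rpow_add_one hx.ne', Real.rpow_neg hx.le]; field_simp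
      _ ≤ _ := mul_le_mul_of_nonneg_left (sub_le_integral_rpow_sub_one_mul_exp ha hx.le)
          (Real.rpow_nonneg hx.le _)
  · calc _ ≤ x ^ (-a) * (x ^ a / a) := mul_le_mul_of_nonneg_left
          (integral_rpow_sub_one_mul_exp_le ha hx.le) (Real.rpow_nonneg hx.le _)
      _ = 1 / a := by rw [mul_div_assoc', ← Real.rpow_add hx, neg_add_cancel, Real.rpow_zero]

end LowerGamma

theorem ProbabilityTheory.IndepFun.measureReal_le_comp_eq_integral_cdf
    {Ω β : Type*} [MeasurableSpace Ω] [MeasurableSpace β] {P : Measure Ω} [IsProbabilityMeasure P]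
    {G : Ω → ℝ} {ξ : Ω → β}
    (hG : Measurable G) (hξ : Measurable ξ) (hindep : IndepFun G ξ P) {f : β → ℝ}
    (hf : Measurable f) :
    P.real {ω | G ω ≤ f (ξ ω)} = ∫ ω, cdf (P.map G) (f (ξ ω)) ∂P := by
  have := Measure.isProbabilityMeasure_map (μ := P) hG.aemeasurable
  have hS : MeasurableSet {p : ℝ × β | p.1 ≤ f p.2} :=
    measurableSet_le measurable_fst (hf.comp measurable_snd)
  have hprod : P.map (fun ω => (G ω, ξ ω)) = (P.map G).prod (P.map ξ) :=
    (indepFun_iff_map_prod_eq_prod_map_map hG.aemeasurable hξ.aemeasurable).mp hindep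
  have hmeas : Measurable fun t => cdf (P.map G) (f t) := (monotone_cdf _).measurable.comp hf
  calc P.real {ω | G ω ≤ f (ξ ω)}
      = ((P.map G).prod (P.map ξ)).real {p : ℝ × β | p.1 ≤ f p.2} := by
        rw [← hprod, map_measureReal_apply (hG.prodMk hξ) hS]; rfl
    _ = ∫ t, cdf (P.map G) (f t) ∂(P.map ξ) := by
        rw [measureReal_def, Measure.prod_apply_symm hS, ← integral_toReal]
        · congr 1; ext t; rw [cdf_eq_real]; rfl
        · exact (measurable_measure_prodMk_right hS).aemeasurable
        · exact ae_of_all _ fun _ => measure_lt_top _ _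
    _ = ∫ ω, cdf (P.map G) (f (ξ ω)) ∂P :=
        integral_map hξ.aemeasurable hmeas.aestronglyMeasurable

lemma tendsto_rpow_mul_comp_const_div_atTop {g : ℝ → ℝ} {a c L : ℝ} (hc : 0 < c)
    (hg : Tendsto (fun x => x ^ (-a) * g x) (𝓝[>] 0) (𝓝 L)) :
    Tendsto (fun s => s ^ a * g (c / s)) atTop (𝓝 (c ^ a * L)) := by
  have hdiv : Tendsto (fun s : ℝ => c / s) atTop (𝓝[>] 0) :=
    (tendsto_inv_atTop_nhdsGT_zero.comp (tendsto_id.atTop_div_const hc)).congr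
      fun s => inv_div s c
  refine ((hg.comp hdiv).const_mul (c ^ a)).congr' ?_
  filter_upwards [eventually_gt_atTop 0] with s hs
  have hca : c ^ a ≠ 0 := by positivity
  rw [Function.comp_apply, ← mul_assoc, Real.rpow_neg (by positivity), Real.div_rpow hc.le hs.le]
  field_simp

theorem tendsto_rpow_mul_integral_comp_const_div {Ω : Type*} [MeasurableSpace Ω]
    {P : Measure Ω} {ξ : Ω → ℝ} {F : ℝ → ℝ} {a c K L : ℝ} (hc : 0 < c)
    (hξ : AEMeasurable ξ P) (hξpos : ∀ᵐ ω ∂P, 0 < ξ ω)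
    (hint : Integrable (fun ω => ξ ω ^ (-a)) P) (hF : Measurable F)
    (hFle : ∀ x, 0 < x → ‖F x‖ ≤ K * x ^ a)
    (hFlim : Tendsto (fun x => x ^ (-a) * F x) (𝓝[>] 0) (𝓝 L)) :
    Tendsto (fun s => s ^ a * ∫ ω, F (c / (s * ξ ω)) ∂P) atTop
      (𝓝 (c ^ a * L * ∫ ω, ξ ω ^ (-a) ∂P)) := by
  have hlim : ∀ ω, 0 < ξ ω →
      Tendsto (fun s => s ^ a * F (c / (s * ξ ω))) atTop (𝓝 (c ^ a * L * ξ ω ^ (-a))) := by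
    intro ω hω
    have h := tendsto_rpow_mul_comp_const_div_atTop (div_pos hc hω) hFlim
    rw [Real.div_rpow hc.le hω.le, ← mul_div_right_comm, div_eq_mul_inv (c ^ a * L),
      ← Real.rpow_neg hω.le] at h
    simpa only [div_div, mul_comm (ξ ω)] using h
  simp_rw [← integral_const_mul]
  refine tendsto_integral_filter_of_dominated_convergence (fun ω => K * c ^ a * ξ ω ^ (-a))
    (Eventually.of_forall fun s => ?_) ?_ (hint.const_mul _) (hξpos.mono hlim)
  · exact (hF.comp_aemeasurable ((hξ.const_mul s).const_div c)).aestronglyMeasurable.const_mul _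
  filter_upwards [eventually_gt_atTop 0] with s hs
  filter_upwards [hξpos] with ω hω
  calc ‖s ^ a * F (c / (s * ξ ω))‖ ≤ s ^ a * (K * (c / (s * ξ ω)) ^ a) := by
        rw [norm_mul, Real.norm_of_nonneg (by positivity)]
        exact mul_le_mul_of_nonneg_left (hFle _ (by positivity)) (by positivity)
    _ = K * c ^ a * ξ ω ^ (-a) := by
        rw [Real.div_rpow hc.le (by positivity), Real.mul_rpow hs.le hω.le, Real.rpow_neg hω.le]
        have : s ^ a ≠ 0 := by positivity
        have : ξ ω ^ a ≠ 0 := by positivity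
        field_simp

theorem chiSq_scaled_outage_limit_general
    {Ω : Type*} [MeasurableSpace Ω] (P : Measure Ω) [IsProbabilityMeasure P]
    (k : ℕ) (hk : 0 < k) (G ξ : Ω → ℝ)
    (hGm : Measurable G) (hξm : Measurable ξ)
    (hindep : IndepFun G ξ P)
    (hG : ∀ x : ℝ, 0 ≤ x →
      (P {ω | G ω ≤ x}).toReal
        = (1 / ((2 : ℝ) ^ ((k : ℝ) / 2) * Real.Gamma ((k : ℝ) / 2))) *
            ∫ t in (0 : ℝ)..x, t ^ ((k : ℝ) / 2 - 1) * Real.exp (-t / 2))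
    (hξpos : ∀ᵐ ω ∂P, 0 < ξ ω)
    (hint : Integrable (fun ω => ξ ω ^ (-(k : ℝ) / 2)) P)
    (c : ℝ) (hc : 0 < c) :
    Tendsto (fun s : ℝ =>
        s ^ ((k : ℝ) / 2) * (P {ω | G ω ≤ c / (s * ξ ω)}).toReal)
      atTop
      (nhds (c ^ ((k : ℝ) / 2) * (∫ ω, ξ ω ^ (-(k : ℝ) / 2) ∂P)
        / (((k : ℝ) / 2) * (2 : ℝ) ^ ((k : ℝ) / 2) * Real.Gamma ((k : ℝ) / 2)))) := by
  rw [neg_div] at hint ⊢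
  set a : ℝ := (k : ℝ) / 2
  have ha : 0 < a := by positivity
  set C : ℝ := (2 : ℝ) ^ a * Real.Gamma a
  set F := cdf (P.map G)
  have hF : ∀ x, 0 ≤ x →
      F x = C⁻¹ * ∫ t in (0 : ℝ)..x, t ^ (a - 1) * Real.exp (-t / 2) := by
    intro x hx
    have := Measure.isProbabilityMeasure_map (μ := P) hGm.aemeasurable
    rw [cdf_eq_real, map_measureReal_apply hGm measurableSet_Iic, inv_eq_one_div]
    exact hG x hx
  have hFle : ∀ x, 0 < x → ‖F x‖ ≤ C⁻¹ / a * x ^ a := fun x hx => by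
    rw [Real.norm_of_nonneg (cdf_nonneg _ _), hF x hx.le, div_mul_comm, mul_comm _ C⁻¹]
    exact mul_le_mul_of_nonneg_left (integral_rpow_sub_one_mul_exp_le ha hx.le) (by positivity)
  have hFlim : Tendsto (fun x => x ^ (-a) * F x) (𝓝[>] 0) (𝓝 (C⁻¹ * (1 / a))) := by
    refine ((tendsto_rpow_neg_mul_integral_rpow_sub_one_mul_exp ha).const_mul C⁻¹).congr' ?_
    filter_upwards [self_mem_nhdsWithin] with x (hx : 0 < x)
    rw [hF x hx.le, mul_left_comm]
  have hlim := tendsto_rpow_mul_integral_comp_const_div hc hξm.aemeasurable hξpos hint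
    (monotone_cdf _).measurable hFle hFlim
  convert hlim using 3 with s
  · exact hindep.measureReal_le_comp_eq_integral_cdf hGm hξm
      (by fun_prop : Measurable fun t : ℝ => c / (s * t))
  · simp only [C]
    field_simp

/-- Let `k` be a positive integer, `G` a chi-squared random variable with `k`
degrees of freedom (i.e., with CDF `F_{χ²_k}(x) = (2^{k/2} Γ(k/2))⁻¹ ∫_0^x t^{k/2-1} e^{-t/2} dt`
for `x ≥ 0`), and `ξ` a positive random variable independent of `G` with `E[ξ^{-k/2}] < ∞`.
Then for every `c > 0`,
`lim_{s→∞} s^{k/2} Pr(G ≤ c/(s ξ)) = c^{k/2} E[ξ^{-k/2}] / ((k/2) 2^{k/2} Γ(k/2))`. -/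
theorem chiSq_scaled_outage_limit
    {Ω : Type*} [MeasurableSpace Ω] (P : Measure Ω) [IsProbabilityMeasure P]
    (k : ℕ) (hk : 0 < k) (G ξ : Ω → ℝ)
    (hGm : Measurable G) (hξm : Measurable ξ)
    (hindep : IndepFun G ξ P)
    (hG : ∀ x : ℝ, 0 ≤ x →
      (P {ω | G ω ≤ x}).toReal
        = (1 / ((2 : ℝ) ^ ((k : ℝ) / 2) * Real.Gamma ((k : ℝ) / 2))) *
            ∫ t in (0 : ℝ)..x, t ^ ((k : ℝ) / 2 - 1) * Real.exp (-t / 2))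
    (hGpos : ∀ᵐ ω ∂P, 0 < G ω)
    (hξpos : ∀ᵐ ω ∂P, 0 < ξ ω)
    (hint : Integrable (fun ω => ξ ω ^ (-(k : ℝ) / 2)) P)
    (c : ℝ) (hc : 0 < c) :
    Tendsto (fun s : ℝ =>
        s ^ ((k : ℝ) / 2) * (P {ω | G ω ≤ c / (s * ξ ω)}).toReal)
      atTop
      (nhds (c ^ ((k : ℝ) / 2) * (∫ ω, ξ ω ^ (-(k : ℝ) / 2) ∂P)
        / (((k : ℝ) / 2) * (2 : ℝ) ^ ((k : ℝ) / 2) * Real.Gamma ((k : ℝ) / 2)))) :=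
  chiSq_scaled_outage_limit_general P k hk G ξ hGm hξm hindep hG hξpos hint c hc
end
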